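/- Fix θ_0 ∈ Θ, an integer B > 1, and a prior density π_0 on Θ (with respect to ν_Θ) whose marginal f̄_{π_0} is positive wherever some f_θ is positive. Let X ~ f_{θ_0}. Conditionally on X, let Z = (θ̂_1, …, θ̂_B) consist of i.i.d. draws from the posterior π(· | X), and let Z′ = (θ̂′_1, …, θ̂′_B) be the corrupted version in which an index K is drawn uniformly from {1, …, B}, θ̂′_K is drawn from the posterior π_0(· | X) under prior π_0, and θ̂′_k = θ̂_k for all k ≠ K. Then the total variation distance between the joint laws of (X, Z) and (X, Z′) is at most Δ(π_0) / (2√B), where Δ(π_0) = E_{X ~ f_{θ_0}}[ χ²(π_0(· | X) ‖ π(· | X))^{1/2} ]. -/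

import Mathlib

open MeasureTheory ProbabilityTheory ENNReal

open scoped Classical

noncomputable section

/-- The total variation distance `d_TV(P, Q) = sup_A |P(A) - Q(A)|` between two measures. -/
def tvDist {Ω : Type*} [MeasurableSpace Ω] (P Q : Measure Ω) : ℝ≥0∞ :=
  ⨆ (s : Set Ω) (_ : MeasurableSet s), (P s - Q s) ⊔ (Q s - P s)

/-- The chi-squared divergence `χ²(Q ‖ P) = ∫ (dQ/dP - 1)² dP` if `Q ≪ P`, and `∞` otherwise. -/
def chiSq {Ω : Type*} [MeasurableSpace Ω] (Q P : Measure Ω) : ℝ≥0∞ :=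
  if Q ≪ P then ∫⁻ ω, ((Q.rnDeriv P ω - 1) ⊔ (1 - Q.rnDeriv P ω)) ^ 2 ∂P else ⊤

/-- A measure on `Fin n → 𝒳` is exchangeable if it is invariant under every permutation of the
coordinates. -/
def Exchangeable {𝒳 : Type*} [MeasurableSpace 𝒳] {n : ℕ} (Q : Measure (Fin n → 𝒳)) : Prop :=
  ∀ σ : Equiv.Perm (Fin n), Measure.map (fun v => v ∘ σ) Q = Q

/-- The distance to exchangeability: the infimum, over exchangeable probability measures `Q`,
of the total variation distance to `Q`. -/
def dExch {𝒳 : Type*} [MeasurableSpace 𝒳] {n : ℕ} (P : Measure (Fin n → 𝒳)) : ℝ≥0∞ :=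
  ⨅ (Q : Measure (Fin n → 𝒳)) (_ : IsProbabilityMeasure Q) (_ : Exchangeable Q), tvDist P Q

/-- The p-value `(1 + #{m : T(v (m+1)) ≥ T(v 0)}) / (M + 1)`, where `v 0` is the data and
`v 1, …, v M` are the copies. -/
def pval {𝒳 : Type*} {M : ℕ} (T : 𝒳 → ℝ) (v : Fin (M + 1) → 𝒳) : ℝ :=
  (1 + ((Finset.univ.filter fun m : Fin M => T (v 0) ≤ T (v m.succ)).card : ℝ)) / (M + 1)

variable {Θ 𝒳 : Type*} [MeasurableSpace Θ] [MeasurableSpace 𝒳]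

/-- The marginal likelihood `f̄_π(x) = ∫ π(θ) f_θ(x) dν_Θ(θ)`. -/
def marg (νΘ : Measure Θ) (π : Θ → ℝ≥0∞) (f : Θ → 𝒳 → ℝ≥0∞) (x : 𝒳) : ℝ≥0∞ :=
  ∫⁻ θ, π θ * f θ x ∂νΘ

/-- The posterior density `π(θ | x) = π(θ) f_θ(x) / f̄_π(x)`. -/
def postDens (νΘ : Measure Θ) (π : Θ → ℝ≥0∞) (f : Θ → 𝒳 → ℝ≥0∞) (x : 𝒳) (θ : Θ) : ℝ≥0∞ :=
  π θ * f θ x / marg νΘ π f x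

/-- The posterior distribution of `θ` given `x`. -/
def postMeas (νΘ : Measure Θ) (π : Θ → ℝ≥0∞) (f : Θ → 𝒳 → ℝ≥0∞) (x : 𝒳) : Measure Θ :=
  νΘ.withDensity (postDens νΘ π f x)

/-- The unnormalized density of the copies: `(∏_b f_{θ_b}(x)) / f̄_π(x)^{B-1}`. -/
def gDensU (νΘ : Measure Θ) (π : Θ → ℝ≥0∞) (f : Θ → 𝒳 → ℝ≥0∞) {B : ℕ}
    (θs : Fin B → Θ) (x : 𝒳) : ℝ≥0∞ :=
  (∏ b, f (θs b) x) / (marg νΘ π f x) ^ (B - 1)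

/-- The normalizing constant of `gDensU`. -/
def gNorm (νΘ : Measure Θ) (ν𝒳 : Measure 𝒳) (π : Θ → ℝ≥0∞) (f : Θ → 𝒳 → ℝ≥0∞) {B : ℕ}
    (θs : Fin B → Θ) : ℝ≥0∞ :=
  ∫⁻ x, gDensU νΘ π f θs x ∂ν𝒳

/-- The probability distribution `g_π(· | θ_{1:B})` on `𝒳`. -/
def gMeas (νΘ : Measure Θ) (ν𝒳 : Measure 𝒳) (π : Θ → ℝ≥0∞) (f : Θ → 𝒳 → ℝ≥0∞) {B : ℕ}
    (θs : Fin B → Θ) : Measure 𝒳 :=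
  ν𝒳.withDensity fun x => gDensU νΘ π f θs x / gNorm νΘ ν𝒳 π f θs

/-- The prior concentration `ε(π₀) = d_TV(f_{θ₀}, f̄_{π₀})`. -/
def priorEps (νΘ : Measure Θ) (ν𝒳 : Measure 𝒳) (f : Θ → 𝒳 → ℝ≥0∞) (θ0 : Θ)
    (π0 : Θ → ℝ≥0∞) : ℝ≥0∞ :=
  tvDist (ν𝒳.withDensity (f θ0)) (ν𝒳.withDensity (marg νΘ π0 f))

/-- The posterior sensitivity `Δ(π₀) = E_{X ~ f_{θ₀}}[χ²(π₀(·|X) ‖ π(·|X))^{1/2}]`. -/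
def priorDelta (νΘ : Measure Θ) (ν𝒳 : Measure 𝒳) (π : Θ → ℝ≥0∞) (f : Θ → 𝒳 → ℝ≥0∞)
    (θ0 : Θ) (π0 : Θ → ℝ≥0∞) : ℝ≥0∞ :=
  ∫⁻ x, (chiSq (postMeas νΘ π0 f x) (postMeas νΘ π f x)) ^ (1 / 2 : ℝ)
    ∂(ν𝒳.withDensity (f θ0))

/-- The bound `inf_{π₀} { ε(π₀) + Δ(π₀) / (2√B) }`, the infimum over all prior densities `π₀`
on `Θ` whose marginal `f̄_{π₀}` is positive wherever some `f_θ` is positive. -/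
def acssBound (νΘ : Measure Θ) (ν𝒳 : Measure 𝒳) (π : Θ → ℝ≥0∞) (f : Θ → 𝒳 → ℝ≥0∞)
    (θ0 : Θ) (B : ℕ) : ℝ≥0∞ :=
  sInf { r : ℝ≥0∞ | ∃ π0 : Θ → ℝ≥0∞, Measurable π0 ∧
    IsProbabilityMeasure (νΘ.withDensity π0) ∧
    (∀ θ x, f θ x ≠ 0 → marg νΘ π0 f x ≠ 0) ∧
    r = priorEps νΘ ν𝒳 f θ0 π0
        + priorDelta νΘ ν𝒳 π f θ0 π0 / (2 * (B : ℝ≥0∞) ^ (1 / 2 : ℝ)) }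

/-!
Fix `x` with `f θ₀ x ≠ 0`; let `u`, `v` be the posterior densities under `π` and `π₀`, `P`, `V`
the posterior laws and `h = dV/dP`, so that `v = u h`. Given `x`, the density of `Z′` is
`∏_b u(θ_b) · h̄` with `h̄ = B⁻¹ ∑_k h(θ_k)`, so the two one-sided halves of the conditional total
variation distance are `E[(1 - h̄)₊]` and `E[(h̄ - 1)₊]` for `θ ~ P^B`. As `E h̄ = 1`, both equal
`E|h̄ - 1| / 2 ≤ (Var h̄)^{1/2} / 2`, and `Var h̄ = Var_P h / B = χ²(V ‖ P) / B`. Averaging over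
`X ~ f_{θ₀}` gives `Δ(π₀) / (2√B)`.
-/

lemma Real.enorm_eq_ofReal_add_ofReal_neg (w : ℝ) :
    ‖w‖ₑ = ENNReal.ofReal w + ENNReal.ofReal (-w) := by
  rcases le_total w 0 with hw | hw
  · simp [Real.enorm_eq_ofReal_abs, abs_of_nonpos hw, ENNReal.ofReal_of_nonpos hw]
  · simp [Real.enorm_eq_ofReal_abs, abs_of_nonneg hw, ENNReal.ofReal_of_nonpos (neg_nonpos.2 hw)]

lemma ENNReal.tsub_one_sup_one_tsub_eq_enorm {a : ℝ≥0∞} (ha : a ≠ ∞) :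
    (a - 1) ⊔ (1 - a) = ‖a.toReal - 1‖ₑ := by
  rw [Real.enorm_eq_ofReal_add_ofReal_neg, neg_sub, ENNReal.ofReal_sub _ zero_le_one,
    ENNReal.ofReal_sub _ toReal_nonneg, ENNReal.ofReal_toReal ha, ENNReal.ofReal_one]
  rcases le_total a 1 with h | h <;> simp [tsub_eq_zero_of_le h]

lemma ENNReal.inv_card_mul_sum_eq_ofReal {ι : Type*} [Fintype ι] [Nonempty ι] {a : ι → ℝ≥0∞}
    (ha : ∀ i, a i ≠ ∞) :
    (Fintype.card ι : ℝ≥0∞)⁻¹ * ∑ i, a i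
      = ENNReal.ofReal ((Fintype.card ι : ℝ)⁻¹ * ∑ i, (a i).toReal) := by
  rw [ENNReal.ofReal_mul (by positivity), ENNReal.ofReal_inv_of_pos, ENNReal.ofReal_natCast,
    ENNReal.ofReal_sum_of_nonneg fun i _ => toReal_nonneg]
  · simp [ENNReal.ofReal_toReal, ha]
  · simp [Fintype.card_pos]

lemma ENNReal.top_rpow_half_div_two_mul_rpow_half (n : ℕ) :
    (∞ : ℝ≥0∞) ^ (1 / 2 : ℝ) / (2 * (n : ℝ≥0∞) ^ (1 / 2 : ℝ)) = ∞ := by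
  rw [top_rpow_of_pos (by norm_num), top_div_of_ne_top]
  exact mul_ne_top ofNat_ne_top (rpow_ne_top_of_nonneg (by norm_num) (natCast_ne_top _))

lemma lintegral_eq_one_of_isProbabilityMeasure_withDensity {Ω : Type*} [MeasurableSpace Ω]
    {μ : Measure Ω} {g : Ω → ℝ≥0∞} [IsProbabilityMeasure (μ.withDensity g)] :
    ∫⁻ ω, g ω ∂μ = 1 := by
  rw [← setLIntegral_univ, ← withDensity_apply _ .univ, measure_univ]

lemma ae_ne_top_of_isProbabilityMeasure_withDensity {Ω : Type*} [MeasurableSpace Ω]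
    {μ : Measure Ω} {g : Ω → ℝ≥0∞} (hg : Measurable g) [IsProbabilityMeasure (μ.withDensity g)] :
    ∀ᵐ ω ∂μ, g ω ≠ ∞ := by
  refine (ae_lt_top hg ?_).mono fun _ h => h.ne
  rw [lintegral_eq_one_of_isProbabilityMeasure_withDensity]
  exact one_ne_top

lemma tvDist_withDensity_le {Ω : Type*} [MeasurableSpace Ω] (μ : Measure Ω) {p q : Ω → ℝ≥0∞}
    (hp : Measurable p) (hq : Measurable q) :
    tvDist (μ.withDensity p) (μ.withDensity q)
      ≤ (∫⁻ x, (p x - q x) ∂μ) ⊔ (∫⁻ x, (q x - p x) ∂μ) := by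
  have key : ∀ {p q : Ω → ℝ≥0∞}, Measurable q → ∀ s, MeasurableSet s →
      μ.withDensity p s - μ.withDensity q s ≤ ∫⁻ x, (p x - q x) ∂μ := by
    intro p q hq s hs
    rw [withDensity_apply _ hs, withDensity_apply _ hs, tsub_le_iff_right]
    calc ∫⁻ x in s, p x ∂μ ≤ ∫⁻ x in s, (p x - q x) + q x ∂μ :=
          setLIntegral_mono' hs fun x _ => le_tsub_add
      _ = ∫⁻ x in s, (p x - q x) ∂μ + ∫⁻ x in s, q x ∂μ := lintegral_add_right _ hq
      _ ≤ ∫⁻ x, (p x - q x) ∂μ + ∫⁻ x in s, q x ∂μ := by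
          gcongr; exact Measure.restrict_le_self
  exact iSup₂_le fun s hs => sup_le_sup (key hq s hs) (key hp s hs)

section JointDensity

variable {X Y : Type*} [MeasurableSpace X] [MeasurableSpace Y] {μ : Measure X} {ν : Measure Y}
  [SFinite ν] {a : X → ℝ≥0∞} {b c : X × Y → ℝ≥0∞}

lemma lintegral_prod_mul_tsub_mul (ha : Measurable a) (hb : Measurable b) (hc : Measurable c)
    (ha_fin : ∀ᵐ x ∂μ, a x ≠ ∞) :
    ∫⁻ z, (a z.1 * b z - a z.1 * c z) ∂(μ.prod ν)
      = ∫⁻ x, a x * ∫⁻ y, (b (x, y) - c (x, y)) ∂ν ∂μ := by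
  rw [lintegral_prod _ (by fun_prop)]
  refine lintegral_congr_ae ?_
  filter_upwards [ha_fin] with x hx
  rw [← lintegral_const_mul _ (by fun_prop)]
  simp_rw [ENNReal.mul_sub fun _ _ => hx]

theorem tvDist_withDensity_prod_le (ha : Measurable a) (hb : Measurable b) (hc : Measurable c)
    (ha_fin : ∀ᵐ x ∂μ, a x ≠ ∞) :
    tvDist ((μ.prod ν).withDensity fun z => a z.1 * b z)
        ((μ.prod ν).withDensity fun z => a z.1 * c z)
      ≤ ∫⁻ x, a x * ((∫⁻ y, (b (x, y) - c (x, y)) ∂ν) ⊔ ∫⁻ y, (c (x, y) - b (x, y)) ∂ν) ∂μ := by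
  refine (tvDist_withDensity_le _ (by fun_prop) (by fun_prop)).trans (sup_le ?_ ?_)
  · rw [lintegral_prod_mul_tsub_mul ha hb hc ha_fin]
    gcongr
    exact le_sup_left
  · rw [lintegral_prod_mul_tsub_mul ha hc hb ha_fin]
    gcongr
    exact le_sup_right

end JointDensity

theorem lintegral_fin_prod_eq_prod {E : Type*} [MeasurableSpace E] {μ : Measure E}
    [SigmaFinite μ] {n : ℕ} {f : Fin n → E → ℝ≥0∞} (hf : ∀ i, Measurable (f i)) :
    ∫⁻ x : Fin n → E, ∏ i, f i (x i) ∂(Measure.pi fun _ => μ) = ∏ i, ∫⁻ y, f i y ∂μ := by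
  induction n with
  | zero => simp
  | succ n ih =>
      calc
        _ = ∫⁻ x : E × (Fin n → E), f 0 x.1 * ∏ i : Fin n, f i.succ (x.2 i)
              ∂(μ.prod (Measure.pi fun _ => μ)) := by
          rw [← ((measurePreserving_piFinSuccAbove (fun _ => μ) 0).symm).lintegral_comp_emb
            (MeasurableEquiv.measurableEmbedding _)]
          simp [MeasurableEquiv.piFinSuccAbove_symm_apply, Fin.prod_univ_succ]
        _ = (∫⁻ y, f 0 y ∂μ) * ∏ i : Fin n, ∫⁻ y, f i.succ y ∂μ := by
          rw [← ih fun i => hf i.succ]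
          exact lintegral_prod_mul (f := f 0)
            (g := fun x : Fin n → E => ∏ i : Fin n, f i.succ (x i)) (hf 0).aemeasurable (Finset.measurable_prod _ fun i _ =>
              (hf i.succ).comp (measurable_pi_apply i)).aemeasurable
        _ = ∏ i, ∫⁻ y, f i y ∂μ := by rw [Fin.prod_univ_succ]

theorem MeasureTheory.Measure.pi_withDensity {E : Type*} [MeasurableSpace E] {μ : Measure E}
    [SigmaFinite μ] {n : ℕ} {u : E → ℝ≥0∞} (hu : Measurable u) [SigmaFinite (μ.withDensity u)] :
    Measure.pi (fun _ : Fin n => μ.withDensity u)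
      = (Measure.pi fun _ : Fin n => μ).withDensity fun x => ∏ i, u (x i) := by
  refine Measure.pi_eq fun s hs => ?_
  rw [withDensity_apply _ (MeasurableSet.univ_pi hs), ← lintegral_indicator (.univ_pi hs)]
  have : (Set.univ.pi s).indicator (fun x => ∏ i, u (x i))
      = fun x => ∏ i, (s i).indicator u (x i) := by
    ext x
    by_cases hx : ∀ i, x i ∈ s i
    · simp [Set.indicator_of_mem, hx]
    · obtain ⟨i, hi⟩ := not_forall.1 hx
      rw [Set.indicator_of_notMem fun h => hi (Set.mem_univ_pi.1 h i),
        Finset.prod_eq_zero (Finset.mem_univ i) (Set.indicator_of_notMem hi _)]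
  rw [this, lintegral_fin_prod_eq_prod fun i => hu.indicator (hs i)]
  simp_rw [withDensity_apply _ (hs _), lintegral_indicator (hs _)]

lemma lintegral_prod_mul_eq_lintegral_pi_withDensity {E : Type*} [MeasurableSpace E]
    {μ : Measure E} [SigmaFinite μ] {n : ℕ} {u : E → ℝ≥0∞} (hu : Measurable u)
    [SigmaFinite (μ.withDensity u)] {G : (Fin n → E) → ℝ≥0∞} (hG : Measurable G) :
    ∫⁻ x, (∏ i, u (x i)) * G x ∂(Measure.pi fun _ => μ)
      = ∫⁻ x, G x ∂(Measure.pi fun _ => μ.withDensity u) := by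
  rw [Measure.pi_withDensity hu, lintegral_withDensity_eq_lintegral_mul _ (by fun_prop) hG]
  rfl

section CenteredMean

variable {Ω : Type*} [MeasurableSpace Ω] {μ : Measure Ω}

lemma lintegral_ofReal_eq_half_lintegral_enorm {W : Ω → ℝ} (hW : Integrable W μ)
    (hW0 : ∫ ω, W ω ∂μ = 0) :
    ∫⁻ ω, ENNReal.ofReal (W ω) ∂μ = (∫⁻ ω, ‖W ω‖ₑ ∂μ) / 2 := by
  have hfin : ∀ g : Ω → ℝ, Integrable g μ → ∫⁻ ω, ENNReal.ofReal (g ω) ∂μ ≠ ∞ := fun g hg =>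
    ((lintegral_mono fun ω => Real.ofReal_le_enorm (g ω)).trans_lt hg.2).ne
  have hsymm : ∫⁻ ω, ENNReal.ofReal (W ω) ∂μ = ∫⁻ ω, ENNReal.ofReal (-W ω) ∂μ := by
    rw [integral_eq_lintegral_pos_part_sub_lintegral_neg_part hW, sub_eq_zero] at hW0
    exact (ENNReal.toReal_eq_toReal_iff' (hfin W hW) (hfin _ hW.neg)).1 hW0
  rw [ENNReal.eq_div_iff two_ne_zero ofNat_ne_top, two_mul]
  nth_rewrite 2 [hsymm]
  simp_rw [Real.enorm_eq_ofReal_add_ofReal_neg]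
  rw [lintegral_add_left' hW.1.aemeasurable.ennreal_ofReal]

lemma lintegral_enorm_sub_integral_le [IsProbabilityMeasure μ] {Z : Ω → ℝ}
    (hZ : AEStronglyMeasurable Z μ) :
    ∫⁻ ω, ‖Z ω - μ[Z]‖ₑ ∂μ ≤ eVar[Z; μ] ^ (1 / 2 : ℝ) := by
  calc ∫⁻ ω, ‖Z ω - μ[Z]‖ₑ ∂μ = eLpNorm (fun ω => Z ω - μ[Z]) 1 μ :=
        eLpNorm_one_eq_lintegral_enorm.symm
    _ ≤ eLpNorm (fun ω => Z ω - μ[Z]) 2 μ :=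
        eLpNorm_le_eLpNorm_of_exponent_le one_le_two (hZ.sub aestronglyMeasurable_const)
    _ = eVar[Z; μ] ^ (1 / 2 : ℝ) := by
        simp [eLpNorm_eq_lintegral_rpow_enorm_toReal two_ne_zero ofNat_ne_top, evariance]

lemma evariance_neg (X : Ω → ℝ) : eVar[fun ω => -X ω; μ] = eVar[X; μ] := by
  simp [evariance, integral_neg, neg_add_eq_sub, enorm_sub_rev]

variable {ι : Type*} [Fintype ι] [Nonempty ι] [IsProbabilityMeasure μ] {X : Ω → ℝ}

lemma evariance_mean_pi (hX : MemLp X 2 μ) :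
    eVar[fun ω : ι → Ω => (Fintype.card ι : ℝ)⁻¹ * ∑ i, X (ω i); Measure.pi fun _ => μ]
      = eVar[X; μ] / Fintype.card ι := by
  have hsum : MemLp (fun ω : ι → Ω => ∑ i, X (ω i)) 2 (Measure.pi fun _ => μ) :=
    memLp_finsetSum _ fun i _ => hX.comp_measurePreserving (measurePreserving_eval _ i)
  rw [← (hsum.const_mul _).ofReal_variance_eq, ← hX.ofReal_variance_eq, variance_const_mul,
    ← Finset.sum_fn, variance_sum_pi fun _ => hX]
  have hn : (0 : ℝ) < Fintype.card ι := by simp [Fintype.card_pos]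
  rw [Finset.sum_const, Finset.card_univ, nsmul_eq_mul,
    show ((Fintype.card ι : ℝ)⁻¹ ^ 2 * (Fintype.card ι * Var[X; μ]))
      = Var[X; μ] / Fintype.card ι by field_simp,
    ENNReal.ofReal_div_of_pos hn, ENNReal.ofReal_natCast]

lemma integral_mean_pi (hX : Integrable X μ) :
    ∫ ω : ι → Ω, (Fintype.card ι : ℝ)⁻¹ * ∑ i, X (ω i) ∂(Measure.pi fun _ => μ) = μ[X] := by
  have heval : ∀ i, ∫ ω : ι → Ω, X (ω i) ∂(Measure.pi fun _ => μ) = μ[X] := fun i => by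
    have hi := measurePreserving_eval (fun _ : ι => μ) i
    rw [← integral_map hi.measurable.aemeasurable (by rw [hi.map_eq]; exact hX.1), hi.map_eq]
  have hsum := integral_finsetSum (μ := Measure.pi fun _ : ι => μ) Finset.univ
    (f := fun i ω => X (ω i)) fun i _ =>
      (measurePreserving_eval _ i).integrable_comp_of_integrable hX
  rw [integral_const_mul, hsum]
  simp [heval]

lemma lintegral_ofReal_mean_sub_integral_le (hX : AEStronglyMeasurable X μ) :
    ∫⁻ ω : ι → Ω, ENNReal.ofReal ((Fintype.card ι : ℝ)⁻¹ * ∑ i, X (ω i) - μ[X])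
        ∂(Measure.pi fun _ => μ)
      ≤ eVar[X; μ] ^ (1 / 2 : ℝ) / (2 * (Fintype.card ι : ℝ≥0∞) ^ (1 / 2 : ℝ)) := by
  by_cases hX2 : MemLp X 2 μ
  swap
  · rw [evariance_eq_top hX hX2, ENNReal.top_rpow_half_div_two_mul_rpow_half]
    exact le_top
  set M := fun ω : ι → Ω => (Fintype.card ι : ℝ)⁻¹ * ∑ i, X (ω i)
  have hM : MemLp M 2 (Measure.pi fun _ => μ) :=
    (memLp_finsetSum _ fun i _ =>
      hX2.comp_measurePreserving (measurePreserving_eval _ i)).const_mul _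
  have hmean : (Measure.pi fun _ => μ)[M] = μ[X] := integral_mean_pi (hX2.integrable one_le_two)
  calc ∫⁻ ω, ENNReal.ofReal (M ω - μ[X]) ∂(Measure.pi fun _ => μ)
      = (∫⁻ ω, ‖M ω - (Measure.pi fun _ => μ)[M]‖ₑ ∂(Measure.pi fun _ => μ)) / 2 := by
        rw [hmean]
        refine lintegral_ofReal_eq_half_lintegral_enorm
          ((hM.integrable one_le_two).sub (integrable_const _)) ?_
        rw [integral_sub (hM.integrable one_le_two) (integrable_const _), hmean]
        simp
    _ ≤ eVar[M; Measure.pi fun _ => μ] ^ (1 / 2 : ℝ) / 2 := by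
        gcongr; exact lintegral_enorm_sub_integral_le hM.1
    _ = eVar[X; μ] ^ (1 / 2 : ℝ) / (2 * (Fintype.card ι : ℝ≥0∞) ^ (1 / 2 : ℝ)) := by
        rw [evariance_mean_pi hX2, ENNReal.div_rpow_of_nonneg _ _ (by norm_num),
          ENNReal.div_eq_inv_mul, ENNReal.div_eq_inv_mul, ENNReal.div_eq_inv_mul,
          ENNReal.mul_inv (.inl two_ne_zero) (.inl ofNat_ne_top)]
        ring

end CenteredMean

lemma chiSq_eq_evariance {Ω : Type*} [MeasurableSpace Ω] {V P : Measure Ω}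
    [IsProbabilityMeasure V] [SigmaFinite P] (hVP : V ≪ P) :
    chiSq V P = eVar[fun ω => (V.rnDeriv P ω).toReal; P] := by
  rw [chiSq, if_pos hVP, evariance, Measure.integral_toReal_rnDeriv hVP, probReal_univ]
  refine lintegral_congr_ae ?_
  filter_upwards [Measure.rnDeriv_lt_top V P] with ω hω
  rw [ENNReal.tsub_one_sup_one_tsub_eq_enorm hω.ne]

section EmpiricalMeanRnDeriv

variable {Ω : Type*} [MeasurableSpace Ω] {V P : Measure Ω} [IsProbabilityMeasure V]
  [IsProbabilityMeasure P] {ι : Type*} [Fintype ι]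

lemma ae_pi_rnDeriv_ne_top :
    ∀ᵐ ω ∂(Measure.pi fun _ : ι => P), ∀ i, V.rnDeriv P (ω i) ≠ ∞ :=
  ae_all_iff.2 fun _ =>
    (Measure.tendsto_eval_ae_ae.eventually (Measure.rnDeriv_lt_top V P)).mono fun _ h => h.ne

variable [Nonempty ι]

lemma lintegral_mean_rnDeriv_sub_one_le (hVP : V ≪ P) :
    ∫⁻ ω : ι → Ω, ((Fintype.card ι : ℝ≥0∞)⁻¹ * ∑ i, V.rnDeriv P (ω i) - 1)
        ∂(Measure.pi fun _ => P)
      ≤ chiSq V P ^ (1 / 2 : ℝ) / (2 * (Fintype.card ι : ℝ≥0∞) ^ (1 / 2 : ℝ)) := by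
  have hmean : P[fun ω => (V.rnDeriv P ω).toReal] = 1 := by
    rw [Measure.integral_toReal_rnDeriv hVP, probReal_univ]
  calc _ = ∫⁻ ω : ι → Ω, ENNReal.ofReal ((Fintype.card ι : ℝ)⁻¹
            * ∑ i, (V.rnDeriv P (ω i)).toReal - P[fun ω => (V.rnDeriv P ω).toReal])
          ∂(Measure.pi fun _ => P) := by
        refine lintegral_congr_ae ?_
        filter_upwards [ae_pi_rnDeriv_ne_top (V := V) (P := P)] with ω hω
        rw [hmean, ENNReal.ofReal_sub _ zero_le_one, ENNReal.ofReal_one,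
          ← ENNReal.inv_card_mul_sum_eq_ofReal hω]
    _ ≤ _ := lintegral_ofReal_mean_sub_integral_le (μ := P)
          (Measure.measurable_rnDeriv V P).ennreal_toReal.aestronglyMeasurable
    _ = _ := by rw [chiSq_eq_evariance hVP]

lemma lintegral_one_sub_mean_rnDeriv_le (hVP : V ≪ P) :
    ∫⁻ ω : ι → Ω, (1 - (Fintype.card ι : ℝ≥0∞)⁻¹ * ∑ i, V.rnDeriv P (ω i))
        ∂(Measure.pi fun _ => P)
      ≤ chiSq V P ^ (1 / 2 : ℝ) / (2 * (Fintype.card ι : ℝ≥0∞) ^ (1 / 2 : ℝ)) := by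
  have hmean : P[fun ω => -(V.rnDeriv P ω).toReal] = -1 := by
    rw [integral_neg, Measure.integral_toReal_rnDeriv hVP, probReal_univ]
  calc _ = ∫⁻ ω : ι → Ω, ENNReal.ofReal ((Fintype.card ι : ℝ)⁻¹
            * ∑ i, -(V.rnDeriv P (ω i)).toReal - P[fun ω => -(V.rnDeriv P ω).toReal])
          ∂(Measure.pi fun _ => P) := by
        refine lintegral_congr_ae ?_
        filter_upwards [ae_pi_rnDeriv_ne_top (V := V) (P := P)] with ω hω
        rw [hmean, Finset.sum_neg_distrib, mul_neg, neg_sub_neg,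
          ENNReal.ofReal_sub _ (by positivity), ENNReal.ofReal_one,
          ← ENNReal.inv_card_mul_sum_eq_ofReal hω]
    _ ≤ _ := lintegral_ofReal_mean_sub_integral_le (μ := P)
          (X := fun ω => -(V.rnDeriv P ω).toReal)
          (Measure.measurable_rnDeriv V P).ennreal_toReal.neg.aestronglyMeasurable
    _ = _ := by rw [evariance_neg, chiSq_eq_evariance hVP]

end EmpiricalMeanRnDeriv

/-- Density of `n` i.i.d. draws from `u` after one uniformly chosen coordinate has been
redrawn from `v`. -/
def corruptedDens {α : Type*} {n : ℕ} (u v : α → ℝ≥0∞) (θs : Fin n → α) : ℝ≥0∞ :=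
  (n : ℝ≥0∞)⁻¹ * ∑ k, v (θs k) * ∏ b ∈ Finset.univ.erase k, u (θs b)

lemma corruptedDens_eq_prod_mul_mean {α : Type*} {n : ℕ} {u v h : α → ℝ≥0∞} {θs : Fin n → α}
    (hv : ∀ k, v (θs k) = u (θs k) * h (θs k)) :
    corruptedDens u v θs = (∏ b, u (θs b)) * ((n : ℝ≥0∞)⁻¹ * ∑ k, h (θs k)) := by
  simp_rw [corruptedDens, hv, mul_comm (u _) (h _), mul_assoc,
    Finset.mul_prod_erase _ (fun b => u (θs b)) (Finset.mem_univ _), ← Finset.sum_mul]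
  ring

lemma ae_corruptedDens_eq_prod_mul_mean {ν : Measure Θ} [SigmaFinite ν] {u v : Θ → ℝ≥0∞}
    (hu : Measurable u) (hv : Measurable v) [IsProbabilityMeasure (ν.withDensity u)]
    (hvu : ν.withDensity v ≪ ν.withDensity u) {n : ℕ} :
    ∀ᵐ θs ∂(Measure.pi fun _ : Fin n => ν), (∏ b, u (θs b)) ≠ ∞ ∧
      corruptedDens u v θs = (∏ b, u (θs b)) * ((n : ℝ≥0∞)⁻¹
        * ∑ k, (ν.withDensity v).rnDeriv (ν.withDensity u) (θs k)) := by
  set h := (ν.withDensity v).rnDeriv (ν.withDensity u)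
  have hvh : v =ᵐ[ν] fun θ => u θ * h θ := by
    refine (withDensity_eq_iff_of_sigmaFinite hv.aemeasurable
      (hu.mul (Measure.measurable_rnDeriv _ _)).aemeasurable).1 ?_
    rw [withDensity_mul _ hu (Measure.measurable_rnDeriv _ _),
      Measure.withDensity_rnDeriv_eq _ _ hvu]
  filter_upwards [ae_all_iff.2 fun k => Measure.tendsto_eval_ae_ae (i := k).eventually
    (hvh.and (ae_ne_top_of_isProbabilityMeasure_withDensity hu))] with θs hθs
  exact ⟨ENNReal.prod_ne_top fun b _ => (hθs b).2,
    corruptedDens_eq_prod_mul_mean fun k => (hθs k).1⟩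

theorem lintegral_prod_tsub_corruptedDens_sup_le {ν : Measure Θ} [SigmaFinite ν]
    {u v : Θ → ℝ≥0∞} (hu : Measurable u) (hv : Measurable v)
    [IsProbabilityMeasure (ν.withDensity u)] [IsProbabilityMeasure (ν.withDensity v)]
    {n : ℕ} [NeZero n] :
    (∫⁻ θs, (∏ b, u (θs b) - corruptedDens u v θs) ∂(Measure.pi fun _ : Fin n => ν))
      ⊔ (∫⁻ θs, (corruptedDens u v θs - ∏ b, u (θs b)) ∂(Measure.pi fun _ : Fin n => ν))
      ≤ chiSq (ν.withDensity v) (ν.withDensity u) ^ (1 / 2 : ℝ)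
          / (2 * (n : ℝ≥0∞) ^ (1 / 2 : ℝ)) := by
  set P := ν.withDensity u
  set V := ν.withDensity v
  by_cases hVP : V ≪ P
  swap
  · rw [chiSq, if_neg hVP, ENNReal.top_rpow_half_div_two_mul_rpow_half]
    exact le_top
  have hcorr := ae_corruptedDens_eq_prod_mul_mean (n := n) hu hv hVP
  have hmean : Measurable fun θs : Fin n → Θ => (n : ℝ≥0∞)⁻¹ * ∑ k, V.rnDeriv P (θs k) :=
    (Finset.measurable_sum _ fun k _ =>
      (Measure.measurable_rnDeriv V P).comp (measurable_pi_apply k)).const_mul _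
  refine sup_le ?_ ?_
  · calc _ = ∫⁻ θs, (∏ b, u (θs b)) * (1 - (n : ℝ≥0∞)⁻¹ * ∑ k, V.rnDeriv P (θs k))
            ∂(Measure.pi fun _ => ν) := by
          refine lintegral_congr_ae ?_
          filter_upwards [hcorr] with θs hθs
          rw [hθs.2, ENNReal.mul_sub fun _ _ => hθs.1, mul_one]
      _ = _ := lintegral_prod_mul_eq_lintegral_pi_withDensity hu (measurable_const.sub hmean)
      _ ≤ _ := by simpa using lintegral_one_sub_mean_rnDeriv_le (ι := Fin n) hVP
  · calc _ = ∫⁻ θs, (∏ b, u (θs b)) * ((n : ℝ≥0∞)⁻¹ * ∑ k, V.rnDeriv P (θs k) - 1)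
            ∂(Measure.pi fun _ => ν) := by
          refine lintegral_congr_ae ?_
          filter_upwards [hcorr] with θs hθs
          rw [hθs.2, ENNReal.mul_sub fun _ _ => hθs.1, mul_one]
      _ = _ := lintegral_prod_mul_eq_lintegral_pi_withDensity hu (hmean.sub measurable_const)
      _ ≤ _ := by simpa using lintegral_mean_rnDeriv_sub_one_le (ι := Fin n) hVP

section Posterior

variable {νΘ : Measure Θ} {ν𝒳 : Measure 𝒳} {f : Θ → 𝒳 → ℝ≥0∞} {π : Θ → ℝ≥0∞}

lemma measurable_marg [SFinite νΘ] (hf : Measurable (Function.uncurry f)) (hπ : Measurable π) :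
    Measurable (marg νΘ π f) :=
  ((hπ.comp measurable_fst).mul hf).lintegral_prod_left'

lemma measurable_postDens [SFinite νΘ] (hf : Measurable (Function.uncurry f))
    (hπ : Measurable π) : Measurable (Function.uncurry (postDens νΘ π f)) :=
  ((hπ.comp measurable_snd).mul (hf.comp measurable_swap)).div
    ((measurable_marg hf hπ).comp measurable_fst)

lemma lintegral_marg [SFinite νΘ] [SFinite ν𝒳] (hf : Measurable (Function.uncurry f))
    (hπ : Measurable π) (hfprob : ∀ θ, IsProbabilityMeasure (ν𝒳.withDensity (f θ))) :
    ∫⁻ x, marg νΘ π f x ∂ν𝒳 = ∫⁻ θ, π θ ∂νΘ := by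
  unfold marg
  rw [lintegral_lintegral_swap ((hπ.comp measurable_snd).mul
    (hf.comp measurable_swap)).aemeasurable]
  refine lintegral_congr fun θ => ?_
  rw [lintegral_const_mul (f := f θ) _ (hf.comp measurable_prodMk_left),
    lintegral_eq_one_of_isProbabilityMeasure_withDensity, mul_one]

lemma ae_marg_ne_top [SFinite νΘ] [SFinite ν𝒳] (hf : Measurable (Function.uncurry f))
    (hπ : Measurable π) (hfprob : ∀ θ, IsProbabilityMeasure (ν𝒳.withDensity (f θ)))
    [IsProbabilityMeasure (νΘ.withDensity π)] :
    ∀ᵐ x ∂ν𝒳, marg νΘ π f x ≠ ∞ := by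
  refine (ae_lt_top (measurable_marg hf hπ) ?_).mono fun _ h => h.ne
  rw [lintegral_marg hf hπ hfprob, lintegral_eq_one_of_isProbabilityMeasure_withDensity]
  exact one_ne_top

lemma isProbabilityMeasure_postMeas {α β : Type*} [MeasurableSpace α] {ν : Measure α}
    {π : α → ℝ≥0∞} {f : α → β → ℝ≥0∞} {x : β} (h0 : marg ν π f x ≠ 0)
    (htop : marg ν π f x ≠ ∞) : IsProbabilityMeasure (postMeas ν π f x) := by
  constructor
  rw [postMeas, withDensity_apply _ .univ, setLIntegral_univ]
  simp_rw [postDens, div_eq_mul_inv]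
  rw [lintegral_mul_const' _ _ (inv_ne_top.2 h0)]
  exact ENNReal.mul_inv_cancel h0 htop

theorem lintegral_postDens_tsub_corruptedDens_sup_le [SigmaFinite νΘ]
    (hf : Measurable (Function.uncurry f)) {π0 : Θ → ℝ≥0∞} (hπ : Measurable π)
    (hπ0 : Measurable π0) {x : 𝒳} (h0 : marg νΘ π f x ≠ 0) (htop : marg νΘ π f x ≠ ∞)
    (h0' : marg νΘ π0 f x ≠ 0) (htop' : marg νΘ π0 f x ≠ ∞) {n : ℕ} [NeZero n] :
    (∫⁻ θs, (∏ b, postDens νΘ π f x (θs b)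
        - corruptedDens (postDens νΘ π f x) (postDens νΘ π0 f x) θs)
        ∂(Measure.pi fun _ : Fin n => νΘ))
      ⊔ (∫⁻ θs, (corruptedDens (postDens νΘ π f x) (postDens νΘ π0 f x) θs
        - ∏ b, postDens νΘ π f x (θs b)) ∂(Measure.pi fun _ : Fin n => νΘ))
      ≤ chiSq (postMeas νΘ π0 f x) (postMeas νΘ π f x) ^ (1 / 2 : ℝ)
          / (2 * (n : ℝ≥0∞) ^ (1 / 2 : ℝ)) :=
  have : IsProbabilityMeasure (νΘ.withDensity (postDens νΘ π f x)) :=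
    isProbabilityMeasure_postMeas h0 htop
  have : IsProbabilityMeasure (νΘ.withDensity (postDens νΘ π0 f x)) :=
    isProbabilityMeasure_postMeas h0' htop'
  lintegral_prod_tsub_corruptedDens_sup_le (u := postDens νΘ π f x) (v := postDens νΘ π0 f x)
    ((measurable_postDens hf hπ).comp measurable_prodMk_left)
    ((measurable_postDens hf hπ0).comp measurable_prodMk_left)

end Posterior

theorem tvDist_corrupted_posterior_draw_le_general
    {Θ 𝒳 : Type*} [MeasurableSpace Θ] [MeasurableSpace 𝒳]
    (νΘ : Measure Θ) (ν𝒳 : Measure 𝒳) [SigmaFinite νΘ] [SigmaFinite ν𝒳]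
    (f : Θ → 𝒳 → ℝ≥0∞) (hf : Measurable (Function.uncurry f))
    (hfprob : ∀ θ, IsProbabilityMeasure (ν𝒳.withDensity (f θ)))
    (π : Θ → ℝ≥0∞) (hπ : Measurable π)
    (hπprob : IsProbabilityMeasure (νΘ.withDensity π))
    (hsupp : ∀ θ x, f θ x ≠ 0 → marg νΘ π f x ≠ 0)
    (B : ℕ) (hB : 1 < B)
    (π0 : Θ → ℝ≥0∞) (hπ0 : Measurable π0)
    (hπ0prob : IsProbabilityMeasure (νΘ.withDensity π0))
    (hsupp0 : ∀ θ x, f θ x ≠ 0 → marg νΘ π0 f x ≠ 0)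
    (θ0 : Θ) :
    tvDist
        ((ν𝒳.prod (Measure.pi fun _ : Fin B => νΘ)).withDensity
          fun p => f θ0 p.1 * ∏ b, postDens νΘ π f p.1 (p.2 b))
        ((ν𝒳.prod (Measure.pi fun _ : Fin B => νΘ)).withDensity
          fun p => f θ0 p.1 * ((B : ℝ≥0∞)⁻¹ *
            ∑ k : Fin B, postDens νΘ π0 f p.1 (p.2 k)
              * ∏ b ∈ Finset.univ.erase k, postDens νΘ π f p.1 (p.2 b)))
      ≤ priorDelta νΘ ν𝒳 π f θ0 π0 / (2 * (B : ℝ≥0∞) ^ (1 / 2 : ℝ)) := by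
  have : NeZero B := ⟨by omega⟩
  have hf0 : Measurable (f θ0) := hf.comp measurable_prodMk_left
  have hf0_fin : ∀ᵐ x ∂ν𝒳, f θ0 x ≠ ∞ := ae_ne_top_of_isProbabilityMeasure_withDensity hf0
  have hpost := measurable_postDens (νΘ := νΘ) hf hπ
  have hpost0 := measurable_postDens (νΘ := νΘ) hf hπ0
  calc _ ≤ ∫⁻ x, f θ0 x * (chiSq (postMeas νΘ π0 f x) (postMeas νΘ π f x) ^ (1 / 2 : ℝ)
          / (2 * (B : ℝ≥0∞) ^ (1 / 2 : ℝ))) ∂ν𝒳 := by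
        refine (tvDist_withDensity_prod_le hf0 (by fun_prop) (by fun_prop) hf0_fin).trans
          (lintegral_mono_ae ?_)
        filter_upwards [ae_marg_ne_top (νΘ := νΘ) hf hπ hfprob,
          ae_marg_ne_top (νΘ := νΘ) hf hπ0 hfprob] with x hx hx0
        rcases eq_or_ne (f θ0 x) 0 with h0 | h0
        · simp [h0]
        gcongr
        exact lintegral_postDens_tsub_corruptedDens_sup_le hf hπ hπ0 (hsupp θ0 x h0) hx
          (hsupp0 θ0 x h0) hx0
    _ = _ := by
        simp_rw [priorDelta, lintegral_withDensity_eq_lintegral_mul_non_measurable _ hf0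
          (hf0_fin.mono fun _ h => h.lt_top), ENNReal.div_eq_inv_mul]
        rw [← lintegral_const_mul' _ _ (inv_ne_top.2 (by positivity))]
        simp_rw [Pi.mul_apply, mul_left_comm]

/-- **Step 4 of the validity proof: TV bound for corrupting one posterior draw.** Let
`X ~ f_{θ₀}`; given `X`, let `Z = (θ̂_1, …, θ̂_B)` be i.i.d. draws from the posterior
`π(· | X)`, and let `Z′` replace a uniformly chosen coordinate by a draw from the posterior
`π₀(· | X)` under the prior `π₀`. Then the TV distance between the joint laws of `(X, Z)` and
`(X, Z′)` is at most `Δ(π₀) / (2√B)`. -/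
theorem tvDist_corrupted_posterior_draw_le
    {Θ 𝒳 : Type*} [MeasurableSpace Θ] [MeasurableSpace 𝒳]
    (νΘ : Measure Θ) (ν𝒳 : Measure 𝒳) [SigmaFinite νΘ] [SigmaFinite ν𝒳]
    (f : Θ → 𝒳 → ℝ≥0∞) (hf : Measurable (Function.uncurry f))
    (hfprob : ∀ θ, IsProbabilityMeasure (ν𝒳.withDensity (f θ)))
    (π : Θ → ℝ≥0∞) (hπ : Measurable π) (hπpos : ∀ θ, 0 < π θ)
    (hπprob : IsProbabilityMeasure (νΘ.withDensity π))
    (hsupp : ∀ θ x, f θ x ≠ 0 → marg νΘ π f x ≠ 0)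
    (B : ℕ) (hB : 1 < B)
    (π0 : Θ → ℝ≥0∞) (hπ0 : Measurable π0)
    (hπ0prob : IsProbabilityMeasure (νΘ.withDensity π0))
    (hsupp0 : ∀ θ x, f θ x ≠ 0 → marg νΘ π0 f x ≠ 0)
    (θ0 : Θ) :
    tvDist
        ((ν𝒳.prod (Measure.pi fun _ : Fin B => νΘ)).withDensity
          fun p => f θ0 p.1 * ∏ b, postDens νΘ π f p.1 (p.2 b))
        ((ν𝒳.prod (Measure.pi fun _ : Fin B => νΘ)).withDensity
          fun p => f θ0 p.1 * ((B : ℝ≥0∞)⁻¹ *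
            ∑ k : Fin B, postDens νΘ π0 f p.1 (p.2 k)
              * ∏ b ∈ Finset.univ.erase k, postDens νΘ π f p.1 (p.2 b)))
      ≤ priorDelta νΘ ν𝒳 π f θ0 π0 / (2 * (B : ℝ≥0∞) ^ (1 / 2 : ℝ)) :=
  tvDist_corrupted_posterior_draw_le_general νΘ ν𝒳 f hf hfprob π hπ hπprob hsupp B hB π0 hπ0 hπ0prob
    hsupp0 θ0
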